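/- Let M ∈ ℝ^{n×n} be symmetric and e_n the all-ones vector in ℝ^n. Then max over y ∈ {0,1}^n of yᵀ M y equals (1/4) · max over x ∈ {-1,1}^{n+1} of xᵀ M̂ x, where M̂ is the (n+1)×(n+1) block matrix with blocks M, M e_n, e_nᵀ M, and e_nᵀ M e_n. -/
import Mathlib


open Matrix

/-- The block matrix `[[M, M e], [eᵀ M, eᵀ M e]]` where `e` is the all-ones vector. -/
def Mhat {n : ℕ} (M : Matrix (Fin n) (Fin n) ℝ) :
    Matrix (Fin n ⊕ Unit) (Fin n ⊕ Unit) ℝ :=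
  Matrix.of fun i j =>
    match i, j with
    | .inl i, .inl j => M i j
    | .inl i, .inr _ => ∑ j, M i j
    | .inr _, .inl j => ∑ i, M i j
    | .inr _, .inr _ => ∑ i, ∑ j, M i j

private lemma mhat_key {n : ℕ} (M : Matrix (Fin n) (Fin n) ℝ) (x : Fin n ⊕ Unit → ℝ) :
    x ⬝ᵥ (Mhat M).mulVec x =
      (fun i => x (.inl i) + x (.inr ())) ⬝ᵥ M.mulVec (fun i => x (.inl i) + x (.inr ())) := by
  simp only [dotProduct, mulVec, Mhat, Matrix.of_apply, Fintype.sum_sum_type,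
    Finset.univ_unique, Finset.sum_singleton]
  simp only [Finset.mul_sum, Finset.sum_mul, add_mul, mul_add, Finset.sum_add_distrib]
  have hCE : (∑ a : Fin n, ∑ b : Fin n, x (Sum.inr ()) * (M a b * x (Sum.inl b)))
      = ∑ b : Fin n, ∑ a : Fin n, x (Sum.inr ()) * (M a b * x (Sum.inl b)) :=
    Finset.sum_comm
  have hd : (default : Unit) = () := rfl
  rw [hd, ← hCE]
  ring

private lemma quad_smul {n : ℕ} (M : Matrix (Fin n) (Fin n) ℝ) (c : ℝ) (y : Fin n → ℝ) :
    (fun i => c * y i) ⬝ᵥ M.mulVec (fun i => c * y i) = c ^ 2 * (y ⬝ᵥ M.mulVec y) := by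
  simp only [dotProduct, mulVec, Finset.mul_sum]
  apply Finset.sum_congr rfl
  intro i _
  apply Finset.sum_congr rfl
  intro j _
  ring

theorem stmt_5 (n : ℕ) (M : Matrix (Fin n) (Fin n) ℝ) (hM : M.IsSymm) :
    sSup {r : ℝ | ∃ y : Fin n → ℝ, (∀ i, y i = 0 ∨ y i = 1) ∧
        r = y ⬝ᵥ M.mulVec y} =
    (1 / 4) * sSup {r : ℝ | ∃ x : Fin n ⊕ Unit → ℝ, (∀ i, x i = -1 ∨ x i = 1) ∧
        r = x ⬝ᵥ (Mhat M).mulVec x} := by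
  set S₁ := {r : ℝ | ∃ y : Fin n → ℝ, (∀ i, y i = 0 ∨ y i = 1) ∧ r = y ⬝ᵥ M.mulVec y} with hS₁
  set S₂ := {r : ℝ | ∃ x : Fin n ⊕ Unit → ℝ, (∀ i, x i = -1 ∨ x i = 1) ∧
      r = x ⬝ᵥ (Mhat M).mulVec x} with hS₂
  have himg : S₂ = (fun r => 4 * r) '' S₁ := by
    ext r
    constructor
    · rintro ⟨x, hx, rfl⟩
      set t := x (.inr ()) with ht
      have ht2 : t * t = 1 := by rcases hx (.inr ()) with h | h <;> rw [← ht] at h <;>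
        rw [h] <;> norm_num
      refine ⟨(fun i => (x (.inl i) * t + 1) / 2) ⬝ᵥ
          M.mulVec (fun i => (x (.inl i) * t + 1) / 2), ⟨_, fun i => ?_, rfl⟩, ?_⟩
      · rcases hx (.inl i) with h | h <;> rcases hx (.inr ()) with h' | h' <;>
          rw [← ht] at h' <;> simp [h, h'] <;> norm_num
      · rw [mhat_key]
        have hw : (fun i => x (.inl i) + x (.inr ())) =
            fun i => (2 * t) * ((x (.inl i) * t + 1) / 2) := by
          funext i
          rw [show (2:ℝ) * t * ((x (Sum.inl i) * t + 1) / 2)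
              = x (Sum.inl i) * (t * t) + t from by ring, ht2, ← ht]
          ring
        rw [hw, quad_smul, show ((2:ℝ) * t) ^ 2 = 4 * (t * t) from by ring, ht2]
        ring
    · rintro ⟨r, ⟨y, hy, rfl⟩, rfl⟩
      set x₀ : Fin n ⊕ Unit → ℝ := Sum.elim (fun i => 2 * y i - 1) (fun _ => 1) with hx₀
      refine ⟨x₀, fun i => ?_, ?_⟩
      · rcases i with i | i
        · rcases hy i with h | h <;> simp [hx₀, h] <;> norm_num
        · simp [hx₀]
      · rw [mhat_key]
        have hw : (fun i => x₀ (.inl i) + x₀ (.inr ())) = fun i => 2 * y i := by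
          funext i; simp [hx₀]
        rw [hw]
        have := quad_smul M 2 y
        rw [this]; ring
  have hne : S₁.Nonempty := ⟨(0:Fin n → ℝ) ⬝ᵥ M.mulVec 0, 0, fun i => Or.inl rfl, rfl⟩
  have hfin : S₁.Finite := by
    have hsub : S₁ ⊆ (fun y : Fin n → ℝ => y ⬝ᵥ M.mulVec y) ''
        (Set.pi Set.univ fun _ => {0, 1}) := by
      rintro r ⟨y, hy, rfl⟩
      exact ⟨y, fun i _ => hy i, rfl⟩
    exact Set.Finite.subset (Set.Finite.image _
      (Set.Finite.pi fun _ => Set.toFinite _)) hsub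
  have hbdd : BddAbove S₁ := hfin.bddAbove
  have hlub : IsLUB S₁ (sSup S₁) := isLUB_csSup hne hbdd
  have hlub2 : IsLUB S₂ (4 * sSup S₁) := by
    rw [himg]
    constructor
    · rintro r ⟨a, ha, rfl⟩
      have := hlub.1 ha
      simp only []
      linarith
    · intro b hb
      have hub : b / 4 ∈ upperBounds S₁ := by
        intro a ha
        have := hb (Set.mem_image_of_mem _ ha)
        linarith
      have := hlub.2 hub
      linarith
  rw [hlub2.csSup_eq (by rw [himg]; exact hne.image _)]
  ring
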